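/- Let K be a finite extension of ℚ_p with normalized valuation v : K^× → ℤ. The homomorphism v̂ : K̂^× → Ẑ induced by v on completions induces a bijection (group isomorphism) between the quotient of K̂^× = lim_n K^×/(K^×)^n by the image of K^× and the quotient of Ẑ = lim_n ℤ/nℤ by the image of ℤ. -/

import Mathlib

set_option synthInstance.maxHeartbeats 400000
set_option maxHeartbeats 1000000
set_option linter.unusedSectionVars false


/-- `K` acquires a `ℤ_[p]`-algebra structure via `ℤ_[p] → ℚ_[p] → K`. -/
noncomputable instance zpAlgebra (p : ℕ) [Fact p.Prime] (K : Type*) [Field K]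
    [Algebra ℚ_[p] K] : Algebra ℤ_[p] K :=
  ((algebraMap ℚ_[p] K).comp (PadicInt.Coe.ringHom : ℤ_[p] →+* ℚ_[p])).toAlgebra

/-- The subgroup of `n`-th powers of a commutative group `G`. -/
def powSubgroup (G : Type*) [CommGroup G] (n : ℕ) : Subgroup G :=
  (powMonoidHom n : G →* G).range

lemma powSubgroup_le (G : Type*) [CommGroup G] {m n : ℕ} (h : m ∣ n) :
    powSubgroup G n ≤ powSubgroup G m := by
  rintro x ⟨y, rfl⟩
  obtain ⟨k, rfl⟩ := h
  exact ⟨y ^ k, by simp [powMonoidHom_apply, ← pow_mul, Nat.mul_comm k m]⟩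

/-- For `m ∣ n`, the transition map `G/Gⁿ → G/Gᵐ` induced by the identity of `G`. -/
def powTransition (G : Type*) [CommGroup G] {m n : ℕ} (h : m ∣ n) :
    (G ⧸ powSubgroup G n) →* (G ⧸ powSubgroup G m) :=
  QuotientGroup.map _ _ (MonoidHom.id G) (fun x hx => powSubgroup_le G h hx)

/-- The inverse limit `Â = lim_n A/Aⁿ` over positive integers ordered by divisibility,
realized as a subgroup of the product of the quotients. -/
def hatGroup (G : Type*) [CommGroup G] : Subgroup (Π n : ℕ+, G ⧸ powSubgroup G (n : ℕ)) where
  carrier := { f | ∀ (m n : ℕ+) (h : (m : ℕ) ∣ (n : ℕ)), powTransition G h (f n) = f m }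
  one_mem' := by
    intro m n h
    simp only [Pi.one_apply, map_one]
  mul_mem' := by
    intro a b ha hb m n h
    simp only [Pi.mul_apply, map_mul, ha m n h, hb m n h]
  inv_mem' := by
    intro a ha m n h
    simp only [Pi.inv_apply, map_inv, ha m n h]

/-- The natural map `G → Ĝ = lim_n G/Gⁿ` sending `x` to the compatible family of its
classes modulo `n`-th powers. -/
def toHatGroup (G : Type*) [CommGroup G] : G →* hatGroup G where
  toFun x := ⟨fun _ => QuotientGroup.mk x, fun m n h => by
    rfl⟩
  map_one' := by
    apply Subtype.ext
    funext n
    simp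
  map_mul' x y := by
    apply Subtype.ext
    funext n
    rfl

/-- `Ẑ = lim_n ℤ/nℤ`, realized as an additive subgroup of `Π n, ZMod n`. -/
def ZHat : AddSubgroup (Π n : ℕ+, ZMod (n : ℕ)) where
  carrier := { f | ∀ (m n : ℕ+) (h : (m : ℕ) ∣ (n : ℕ)),
    ZMod.castHom h (ZMod (m : ℕ)) (f n) = f m }
  zero_mem' := by
    intro m n h
    simp only [Pi.zero_apply, map_zero]
  add_mem' := by
    intro a b ha hb m n h
    simp only [Pi.add_apply, map_add, ha m n h, hb m n h]
  neg_mem' := by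
    intro a ha m n h
    simp only [Pi.neg_apply, map_neg, ha m n h]

/-- The natural map `ℤ → Ẑ`. -/
def toZHat : ℤ →+ ZHat where
  toFun k := ⟨fun n => (k : ZMod (n : ℕ)),
    fun m n h => map_intCast (ZMod.castHom h (ZMod (m : ℕ))) k⟩
  map_zero' := by
    apply Subtype.ext
    funext n
    simp
  map_add' x y := by
    apply Subtype.ext
    funext n
    push_cast
    rfl

/-- The map `Kˣ/(Kˣ)ⁿ → ℤ/nℤ` induced by a valuation `v : Kˣ → ℤ`. -/
def valBar {K : Type*} [Field K] (v : Kˣ →* Multiplicative ℤ) (n : ℕ) :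
    (Kˣ ⧸ powSubgroup Kˣ n) → ZMod n := fun q =>
  Quotient.liftOn' q (fun x => ((Multiplicative.toAdd (v x) : ℤ) : ZMod n))
    (by
      intro a b hab
      have h1 : a⁻¹ * b ∈ powSubgroup Kˣ n := QuotientGroup.leftRel_apply.mp hab
      obtain ⟨y, hy⟩ := h1
      have hy' : y ^ n = a⁻¹ * b := hy
      have hb : b = a * y ^ n := by rw [hy', mul_inv_cancel_left]
      have hv : Multiplicative.toAdd (v b)
          = Multiplicative.toAdd (v a) + n • Multiplicative.toAdd (v y) := by
        rw [hb, map_mul, map_pow, toAdd_mul, toAdd_pow]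
      show ((Multiplicative.toAdd (v a) : ℤ) : ZMod n)
          = ((Multiplicative.toAdd (v b) : ℤ) : ZMod n)
      rw [hv]
      push_cast [nsmul_eq_mul]
      simp [ZMod.natCast_self])

lemma valBar_comm {K : Type*} [Field K] (v : Kˣ →* Multiplicative ℤ) {m n : ℕ} (h : m ∣ n)
    (q : Kˣ ⧸ powSubgroup Kˣ n) :
    ZMod.castHom h (ZMod m) (valBar v n q) = valBar v m (powTransition Kˣ h q) := by
  refine Quotient.inductionOn' q (fun x => ?_)
  have h1 : valBar v n (Quotient.mk'' x) = ((Multiplicative.toAdd (v x) : ℤ) : ZMod n) := rfl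
  have h2 : powTransition Kˣ h (Quotient.mk'' x) = Quotient.mk'' x := rfl
  rw [h1, h2]
  exact map_intCast (ZMod.castHom h (ZMod m)) _

/-- The "completed valuation" `v̂ : K̂ˣ → Ẑ` induced by the valuation `v` on completions. -/
def valHat {K : Type*} [Field K] (v : Kˣ →* Multiplicative ℤ) : hatGroup Kˣ → ZHat :=
  fun α => ⟨fun n => valBar v (n : ℕ) (α.1 n), by
    intro m n h
    rw [valBar_comm v h (α.1 n), α.2 m n h]⟩


namespace St5

lemma zp_smod (p : ℕ) [Fact p.Prime] (m : ℕ) :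
    ((IsLocalRing.maximalIdeal ℤ_[p]) ^ m • ⊤ : Submodule ℤ_[p] ℤ_[p]) =
      Ideal.span {(p : ℤ_[p]) ^ m} := by
  simp only [smul_eq_mul, Ideal.mul_top, PadicInt.maximalIdeal_eq_span_p,
    Ideal.span_singleton_pow]

lemma zp_haus (p : ℕ) [Fact p.Prime] (x : ℤ_[p])
    (h : ∀ n, x ∈ Ideal.span {(p : ℤ_[p]) ^ n}) : x = 0 := by
  refine IsHausdorff.haus (inferInstance : IsHausdorff (IsLocalRing.maximalIdeal ℤ_[p]) ℤ_[p]) x ?_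
  intro n
  rw [SModEq.zero, zp_smod]
  exact h n

variable (p : ℕ) [Fact p.Prime] (K : Type*) [Field K] [Algebra ℚ_[p] K]
  [FiniteDimensional ℚ_[p] K]

instance : IsScalarTower ℤ_[p] ℚ_[p] K := IsScalarTower.of_algebraMap_eq (fun _ => rfl)

instance : NoZeroSMulDivisors ℤ_[p] K :=
  ⟨fun {c x} h => by
    rw [Algebra.smul_def, mul_eq_zero] at h
    refine h.imp_left (fun h0 => ?_)
    have hc : ((c : ℚ_[p])) = 0 :=
      (algebraMap ℚ_[p] K).injective (h0.trans (map_zero (algebraMap ℚ_[p] K)).symm)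
    exact Subtype.ext hc⟩

noncomputable instance : Module.Free ℤ_[p] (integralClosure ℤ_[p] K) :=
  IsIntegralClosure.module_free ℤ_[p] ℚ_[p] K (integralClosure ℤ_[p] K)
instance : Module.Finite ℤ_[p] (integralClosure ℤ_[p] K) :=
  IsIntegralClosure.finite ℤ_[p] ℚ_[p] K (integralClosure ℤ_[p] K)

local notation "R'" => integralClosure ℤ_[p] K

/-- membership in span (p^k) via coordinates -/
lemma mem_span_p_iff (k : ℕ) (x : integralClosure ℤ_[p] K) :
    x ∈ Ideal.span {(p : integralClosure ℤ_[p] K) ^ k} ↔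
      ∀ i, (Module.Free.chooseBasis ℤ_[p] R').repr x i ∈ Ideal.span {(p : ℤ_[p]) ^ k} := by
  set b := Module.Free.chooseBasis ℤ_[p] R'
  constructor
  · rintro hx i
    rw [Ideal.mem_span_singleton'] at hx
    obtain ⟨y, hy⟩ := hx
    have : x = ((p : ℤ_[p]) ^ k) • y := by
      rw [Algebra.smul_def, map_pow, map_natCast, ← hy, mul_comm]
    rw [this, map_smul]
    exact Ideal.mem_span_singleton'.2 ⟨b.repr y i, (mul_comm _ _)⟩
  · intro h
    choose c hc using fun i => Ideal.mem_span_singleton'.1 (h i)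
    have hx : x = ((p : ℤ_[p]) ^ k) • (b.repr.symm (Finsupp.equivFunOnFinite.symm
        (fun i => c i))) := by
      apply b.repr.injective
      ext i
      rw [map_smul]
      simp only [Module.Basis.repr_symm_apply, Module.Basis.repr_linearCombination]
      simpa [mul_comm] using (hc i).symm
    rw [Ideal.mem_span_singleton']
    exact ⟨_, by rw [hx, Algebra.smul_def, map_pow, map_natCast, mul_comm]⟩

/-- Hausdorff property of `R`. -/
lemma R_haus (x : integralClosure ℤ_[p] K)
    (h : ∀ k, x ∈ Ideal.span {(p : integralClosure ℤ_[p] K) ^ k}) : x = 0 := by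
  set b := Module.Free.chooseBasis ℤ_[p] R'
  have : ∀ i, b.repr x i = 0 := fun i =>
    zp_haus p _ (fun k => (mem_span_p_iff p K k x).1 (h k) i)
  apply b.repr.injective
  ext i
  simp [this i]

/-- Completeness of `R`. -/
lemma R_complete (f : ℕ → integralClosure ℤ_[p] K)
    (hf : ∀ k, f (k + 1) - f k ∈ Ideal.span {(p : integralClosure ℤ_[p] K) ^ k}) :
    ∃ y, ∀ k, y - f k ∈ Ideal.span {(p : integralClosure ℤ_[p] K) ^ k} := by
  set b := Module.Free.chooseBasis ℤ_[p] R'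
  have key : ∀ {k l : ℕ}, k ≤ l → f l - f k ∈ Ideal.span {(p : R') ^ k} := by
    intro k l hkl
    induction l with
    | zero => simp_all [Nat.le_zero.1 hkl]
    | succ l ih =>
      rcases Nat.lt_or_ge k (l + 1) with h | h
      · have hk : k ≤ l := Nat.lt_succ_iff.1 h
        have : f (l+1) - f k = (f (l+1) - f l) + (f l - f k) := by ring
        rw [this]
        exact Ideal.add_mem _ (Ideal.span_singleton_le_span_singleton.2
          (pow_dvd_pow _ hk) (hf l)) (ih hk)
      · have : k = l + 1 := le_antisymm hkl h
        subst this; simp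
  have coord : ∀ i, ∃ L : ℤ_[p], ∀ k, b.repr (f k) i - L ∈ Ideal.span {(p : ℤ_[p]) ^ k} := by
    intro i
    have := IsPrecomplete.prec (inferInstance : IsPrecomplete (IsLocalRing.maximalIdeal ℤ_[p]) ℤ_[p])
      (f := fun k => b.repr (f k) i) ?_
    · obtain ⟨L, hL⟩ := this
      exact ⟨L, fun k => by have := hL k; rwa [SModEq.sub_mem, zp_smod] at this⟩
    · intro m n hmn
      rw [SModEq.sub_mem, zp_smod]
      have : b.repr (f m) i - b.repr (f n) i = - (b.repr (f n - f m) i) := by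
        simp [map_sub]
      rw [this]
      exact neg_mem ((mem_span_p_iff p K m _).1 (key hmn) i)
  choose L hL using coord
  refine ⟨b.repr.symm (Finsupp.equivFunOnFinite.symm L), fun k => ?_⟩
  rw [mem_span_p_iff]
  intro i
  have : b.repr (b.repr.symm (Finsupp.equivFunOnFinite.symm L) - f k) i
      = -(b.repr (f k) i - L i) := by
    simp [map_sub, Module.Basis.repr_symm_apply, Module.Basis.repr_linearCombination]
  rw [this]
  exact neg_mem (hL i k)


/-- The quotient `R/p^k` is finite. -/
lemma R_quot_finite (k : ℕ) :
    Finite (integralClosure ℤ_[p] K ⧸ Ideal.span {(p : integralClosure ℤ_[p] K) ^ k}) := by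
  set b := Module.Free.chooseBasis ℤ_[p] R'
  set I := Ideal.span {(p : R') ^ k}
  refine Finite.of_surjective
    (f := fun c : (Module.Free.ChooseBasisIndex ℤ_[p] R') → Fin (p ^ k) =>
      Ideal.Quotient.mk I (b.repr.symm (Finsupp.equivFunOnFinite.symm
        (fun i => ((c i : ℕ) : ℤ_[p]))))) ?_
  intro q
  obtain ⟨x, rfl⟩ := Ideal.Quotient.mk_surjective q
  have hppos : 0 < p ^ k := pow_pos (Nat.Prime.pos (Fact.out)) k
  refine ⟨fun i => ⟨(b.repr x i).appr k, PadicInt.appr_lt _ _⟩, ?_⟩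
  rw [Ideal.Quotient.eq]
  rw [mem_span_p_iff]
  intro i
  have : b.repr (b.repr.symm (Finsupp.equivFunOnFinite.symm
      (fun i => (((b.repr x i).appr k : ℕ) : ℤ_[p]))) - x) i
      = -((b.repr x i) - ((b.repr x i).appr k : ℤ_[p])) := by
    simp [map_sub, Module.Basis.repr_symm_apply, Module.Basis.repr_linearCombination]
  rw [this]
  exact neg_mem (PadicInt.appr_spec k _)

/-- exponent killing units modulo `p^k` -/
noncomputable def NN (k : ℕ) : ℕ :=
  Nat.card (integralClosure ℤ_[p] K ⧸ Ideal.span {(p : integralClosure ℤ_[p] K) ^ k})ˣ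

lemma NN_pos (k : ℕ) : 0 < NN p K k := by
  have := R_quot_finite p K k
  have : Finite (integralClosure ℤ_[p] K ⧸ Ideal.span {(p : integralClosure ℤ_[p] K) ^ k})ˣ :=
    inferInstance
  exact Nat.card_pos

lemma unit_pow_NN (k : ℕ) (w : (integralClosure ℤ_[p] K)ˣ) :
    ((w : integralClosure ℤ_[p] K) ^ (NN p K k) - 1) ∈
      Ideal.span {(p : integralClosure ℤ_[p] K) ^ k} := by
  set I := Ideal.span {(p : R') ^ k}
  have : Ideal.Quotient.mk I ((w : R') ^ (NN p K k) - 1) = 0 := by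
    have := R_quot_finite p K k
    have h1 : (Units.map (Ideal.Quotient.mk I).toMonoidHom w) ^ (NN p K k) = 1 :=
      pow_card_eq_one'
    have h2 : (Ideal.Quotient.mk I ((w : R'))) ^ (NN p K k) = 1 := by
      have := congrArg (Units.val) h1
      simpa using this
    rw [map_sub, map_pow, h2, map_one, sub_self]
  rwa [Ideal.Quotient.eq_zero_iff_mem] at this

/-- `1 + p x` is invertible in `R`. -/
lemma one_add_p_unit (x : integralClosure ℤ_[p] K) :
    ∃ u : integralClosure ℤ_[p] K, (1 + (p : integralClosure ℤ_[p] K) * x) * u = 1 := by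
  set r : R' := -((p : R') * x)
  have hsum : ∀ j, (∑ i ∈ Finset.range (j+1), r ^ i) - (∑ i ∈ Finset.range j, r ^ i)
      ∈ Ideal.span {(p : R') ^ j} := by
    intro j
    rw [Finset.sum_range_succ, add_sub_cancel_left, Ideal.mem_span_singleton]
    exact pow_dvd_pow_of_dvd ⟨-x, by ring⟩ j
  obtain ⟨u, hu⟩ := R_complete p K (fun j => ∑ i ∈ Finset.range j, r ^ i) hsum
  refine ⟨u, ?_⟩
  have key : ∀ j, (1 + (p : R') * x) * u - 1 ∈ Ideal.span {(p : R') ^ j} := by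
    intro j
    have h1 : (1 + (p : R') * x) * u - 1
        = (1 - r) * (u - ∑ i ∈ Finset.range j, r ^ i)
          + ((1 - r) * (∑ i ∈ Finset.range j, r ^ i) - 1) := by
      simp only [r]; ring
    have h2 : (1 - r) * (∑ i ∈ Finset.range j, r ^ i) - 1 = -(r ^ j) := by
      have := geom_sum_mul r j
      have h3 : (1 - r) * (∑ i ∈ Finset.range j, r ^ i)
          = -((∑ i ∈ Finset.range j, r ^ i) * (r - 1)) := by ring
      rw [h3, this]; ring
    rw [h1, h2]
    refine Ideal.add_mem _ (Ideal.mul_mem_left _ _ (hu j)) ?_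
    rw [Ideal.mem_span_singleton]
    exact (pow_dvd_pow_of_dvd ⟨-x, by ring⟩ j).neg_right
  have := R_haus p K _ key
  linear_combination this

lemma nth_root (n a n' : ℕ) (hn' : ¬ (p : ℤ) ∣ (n' : ℤ)) (hn : n = p ^ a * n')
    (w : integralClosure ℤ_[p] K)
    (hw : w - 1 ∈ Ideal.span {(p : integralClosure ℤ_[p] K) ^ (2 * a + 1)}) :
    ∃ y : integralClosure ℤ_[p] K, y ^ n = w := by
  have hn'u : IsUnit ((n' : ℤ_[p])) := by
    rw [PadicInt.isUnit_iff]
    refine le_antisymm (PadicInt.norm_le_one _) ?_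
    by_contra hlt
    push_neg at hlt
    have : ‖((n' : ℤ) : ℤ_[p])‖ < 1 := by push_cast; exact hlt
    exact hn' ((PadicInt.norm_int_lt_one_iff_dvd _).1 this)
  have hn'R : IsUnit ((n' : integralClosure ℤ_[p] K)) := by
    have := hn'u.map (algebraMap ℤ_[p] R')
    rwa [map_natCast] at this
  have hcast : ((n : R')) = (p : R') ^ a * (n' : R') := by
    rw [hn]; push_cast; ring
  -- the Newton step
  have step : ∀ (j : ℕ) (y : R'), ∃ y' : R',
      (y - 1 ∈ Ideal.span {(p : R')} ∧ y ^ n - w ∈ Ideal.span {(p : R') ^ (2*a+1+j)}) →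
      (y' - 1 ∈ Ideal.span {(p : R')} ∧ y' ^ n - w ∈ Ideal.span {(p : R') ^ (2*a+1+(j+1))}
        ∧ y' - y ∈ Ideal.span {(p : R') ^ j}) := by
    intro j y
    by_cases hy : y - 1 ∈ Ideal.span {(p : R')} ∧ y ^ n - w ∈ Ideal.span {(p : R') ^ (2*a+1+j)}
    swap
    · exact ⟨y, fun h => (hy h).elim⟩
    obtain ⟨hy1, hy2⟩ := hy
    obtain ⟨x, hx⟩ := Ideal.mem_span_singleton'.1 hy1
    obtain ⟨u, hu⟩ := one_add_p_unit p K x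
    have hyu : IsUnit y := by
      refine IsUnit.of_mul_eq_one (a := y) u ?_
      have : y = 1 + (p : R') * x := by linear_combination -hx
      rw [this]; exact hu
    obtain ⟨d, hd⟩ := Ideal.mem_span_singleton'.1 hy2
    have he : IsUnit ((n' : R') * y ^ (n - 1)) := hn'R.mul (hyu.pow _)
    set ei : R' := ((he.unit⁻¹ : R'ˣ) : R') with hei
    have hes : (n' : R') * y ^ (n - 1) * ei = 1 := by
      rw [hei]
      exact he.mul_val_inv
    set s : R' := -(ei * d) with hs
    obtain ⟨k, hk⟩ := Polynomial.binomExpansion (Polynomial.X ^ n : Polynomial R') y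
      ((p : R') ^ (a + 1 + j) * s)
    simp only [Polynomial.eval_pow, Polynomial.eval_X, Polynomial.derivative_X_pow,
      Polynomial.eval_mul, Polynomial.eval_natCast, Polynomial.eval_C] at hk
    refine ⟨y + (p : R') ^ (a + 1 + j) * s, fun _ => ⟨?_, ?_, ?_⟩⟩
    · obtain ⟨x1, hx1⟩ := Ideal.mem_span_singleton'.1 hy1
      refine Ideal.mem_span_singleton'.2 ⟨x1 + (p : R') ^ (a + j) * s, ?_⟩
      linear_combination hx1
    · refine Ideal.mem_span_singleton'.2 ⟨k * s ^ 2 * (p : R') ^ j, ?_⟩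
      linear_combination -hk + hd + (-(y ^ (n-1) * (p : R') ^ (a+1+j) * s)) * hcast
        + (-((p : R') ^ (2*a+1+j) * (n' : R') * y ^ (n-1))) * hs
        + ((p : R') ^ (2*a+1+j) * d) * hes
    · exact Ideal.mem_span_singleton'.2 ⟨(p : R') ^ (a + 1) * s, by ring⟩
  choose st hst using step
  let g : ℕ → R' := fun j => j.rec 1 (fun j y => st j y)
  have hg0 : g 0 = 1 := rfl
  have hgs : ∀ j, g (j + 1) = st j (g j) := fun j => rfl
  have inv : ∀ j, g j - 1 ∈ Ideal.span {(p : R')} ∧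
      g j ^ n - w ∈ Ideal.span {(p : R') ^ (2*a+1+j)} := by
    intro j
    induction j with
    | zero =>
      constructor
      · simp [hg0]
      · rw [hg0, one_pow]
        have : (1 : R') - w = -(w - 1) := by ring
        rw [this]
        exact neg_mem hw
    | succ j ih =>
      rw [hgs]
      exact ⟨(hst j (g j) ih).1, (hst j (g j) ih).2.1⟩
  have hinc : ∀ j, g (j + 1) - g j ∈ Ideal.span {(p : R') ^ j} := by
    intro j
    rw [hgs]
    exact (hst j (g j) (inv j)).2.2
  obtain ⟨y, hy⟩ := R_complete p K g hinc
  refine ⟨y, ?_⟩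
  have : ∀ j, y ^ n - w ∈ Ideal.span {(p : R') ^ j} := by
    intro j
    have h1 : y ^ n - w = (y ^ n - g j ^ n) + (g j ^ n - w) := by ring
    rw [h1]
    refine Ideal.add_mem _ ?_ (Ideal.span_singleton_le_span_singleton.2
      (pow_dvd_pow _ (by omega)) ((inv j).2))
    rw [Ideal.mem_span_singleton]
    exact dvd_trans (Ideal.mem_span_singleton.1 (hy j)) (sub_dvd_pow_sub_pow y (g j) n)
  have := R_haus p K _ this
  linear_combination this

variable (v : Kˣ →* Multiplicative ℤ)

/-- `x` is a unit congruent to `1` modulo `p^k`. -/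
def ok (k : ℕ) (x : Kˣ) : Prop := Multiplicative.toAdd (v x) = 0 ∧
  ∃ r : integralClosure ℤ_[p] K, (x : K) = 1 + (p : K) ^ k * r

lemma ok_mono {k l : ℕ} (hkl : k ≤ l) {x : Kˣ} (hx : ok p K v l x) : ok p K v k x := by
  obtain ⟨h1, r, h2⟩ := hx
  refine ⟨h1, (p : integralClosure ℤ_[p] K) ^ (l - k) * r, ?_⟩
  have hkk : k + (l - k) = l := by omega
  push_cast
  rw [← mul_assoc, ← pow_add, hkk]
  exact h2

lemma ok_mul {k : ℕ} {x y : Kˣ} (hx : ok p K v k x) (hy : ok p K v k y) :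
    ok p K v k (x * y) := by
  obtain ⟨h1, r, h2⟩ := hx
  obtain ⟨h3, s, h4⟩ := hy
  refine ⟨by rw [map_mul, toAdd_mul, h1, h3, add_zero], r + s + (p : integralClosure ℤ_[p] K) ^ k * r * s, ?_⟩
  rw [Units.val_mul, h2, h4]
  push_cast
  ring

lemma ok_one (k : ℕ) : ok p K v k 1 := ⟨by simp, 0, by simp⟩

lemma ok_pow {k : ℕ} {x : Kˣ} (hx : ok p K v k x) (t : ℕ) : ok p K v k (x ^ t) := by
  induction t with
  | zero => simpa using ok_one p K v k
  | succ t ih => rw [pow_succ]; exact ok_mul p K v ih hx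

variable (hv_unit : ∀ x : Kˣ, ((x : K) ∈ integralClosure ℤ_[p] K ∧
      ((x⁻¹ : Kˣ) : K) ∈ integralClosure ℤ_[p] K) ↔ Multiplicative.toAdd (v x) = 0)

include hv_unit in
lemma ok_inv {k : ℕ} {x : Kˣ} (hx : ok p K v k x) : ok p K v k x⁻¹ := by
  obtain ⟨h1, r, h2⟩ := hx
  have hmem := (hv_unit x).2 h1
  refine ⟨by rw [map_inv, toAdd_inv, h1, neg_zero], -(r * ⟨_, hmem.2⟩), ?_⟩
  have hxi : ((⟨((x⁻¹ : Kˣ) : K), hmem.2⟩ : integralClosure ℤ_[p] K) : K)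
      = ((x⁻¹ : Kˣ) : K) := rfl
  have hprod : (x : K) * ((x : K))⁻¹ = 1 := mul_inv_cancel₀ (Units.ne_zero x)
  push_cast [hxi]
  linear_combination (-((x : K))⁻¹) * h2 + hprod

include hv_unit in
lemma ok_of_dvd_NN {k : ℕ} {x : Kˣ} (hx : Multiplicative.toAdd (v x) = 0) {m : ℕ}
    (hm : NN p K k ∣ m) : ok p K v k (x ^ m) := by
  obtain ⟨h1, h2⟩ := (hv_unit x).2 hx
  have hinv : ((x⁻¹ : Kˣ) : K) = (x : K)⁻¹ := by rw [← Units.val_inv_eq_inv_val]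
  set w : (integralClosure ℤ_[p] K)ˣ :=
    ⟨⟨(x : K), h1⟩, ⟨((x⁻¹ : Kˣ) : K), h2⟩,
      Subtype.ext (by simp [hinv, Units.ne_zero x]),
      Subtype.ext (by simp [hinv, Units.ne_zero x])⟩ with hw
  obtain ⟨t, rfl⟩ := hm
  have hNN := unit_pow_NN p K k w
  obtain ⟨r, hr⟩ := Ideal.mem_span_singleton'.1 hNN
  have hxN : ok p K v k (x ^ (NN p K k)) := by
    refine ⟨by rw [map_pow, toAdd_pow, hx, smul_zero], r, ?_⟩
    have h3 := congrArg (fun z : integralClosure ℤ_[p] K => (z : K)) hr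
    push_cast at h3
    rw [Units.val_pow_eq_pow_val]
    linear_combination -h3
  rw [pow_mul]
  exact ok_pow p K v hxN t

/-- If `x ≡ 1 mod p^(2a+1)` where `a = v_p(n)`, then `x` is an `n`-th power in `Kˣ`. -/
lemma ok_root {n : ℕ} (hn : 0 < n) {x : Kˣ}
    (hx : ok p K v (2 * (n.factorization p) + 1) x) :
    ∃ z : Kˣ, z ^ n = x := by
  obtain ⟨hx0, r, hr⟩ := hx
  set a := n.factorization p with ha
  have hfact : p ^ a * (n / p ^ a) = n := Nat.ordProj_mul_ordCompl_eq_self n p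
  have hcop : ¬ p ∣ (n / p ^ a) := Nat.not_dvd_ordCompl (Fact.out) hn.ne'
  have hcopz : ¬ (p : ℤ) ∣ ((n / p ^ a : ℕ) : ℤ) := by
    rw [Int.natCast_dvd_natCast]; exact hcop
  set wR : integralClosure ℤ_[p] K := 1 + (p : integralClosure ℤ_[p] K) ^ (2*a+1) * r with hwR
  have hwRK : (wR : K) = (x : K) := by rw [hwR]; push_cast; linear_combination -hr
  have hspan : wR - 1 ∈ Ideal.span {(p : integralClosure ℤ_[p] K) ^ (2*a+1)} :=
    Ideal.mem_span_singleton'.2 ⟨r, by rw [hwR]; ring⟩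
  obtain ⟨y, hy⟩ := nth_root p K n a (n / p ^ a) hcopz hfact.symm wR hspan
  have hyK : ((y : K)) ^ n = (x : K) := by
    rw [← hwRK, ← hy]; push_cast; ring
  have hyne : (y : K) ≠ 0 := by
    intro h0
    rw [h0, zero_pow hn.ne'] at hyK
    exact (Units.ne_zero x) hyK.symm
  refine ⟨Units.mk0 (y : K) hyne, Units.ext ?_⟩
  rw [Units.val_pow_eq_pow_val, Units.val_mk0]
  exact hyK

include hv_unit in
lemma core0 (hv_surj : Function.Surjective v) (β : hatGroup Kˣ)
    (hβ : ∀ n : ℕ+, valBar v (n : ℕ) (β.1 n) = 0) : β ∈ (toHatGroup Kˣ).range := by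
  classical
  obtain ⟨π, hπ⟩ := hv_surj (Multiplicative.ofAdd 1)
  have hπ1 : Multiplicative.toAdd (v π) = 1 := by rw [hπ]; rfl
  -- choose representatives of valuation zero
  have hrep : ∀ n : ℕ+, ∃ u : Kˣ, QuotientGroup.mk u = β.1 n
      ∧ Multiplicative.toAdd (v u) = 0 := by
    intro n
    obtain ⟨w, hw⟩ := Quotient.exists_rep (β.1 n)
    have hw' : (QuotientGroup.mk w : Kˣ ⧸ powSubgroup Kˣ (n : ℕ)) = β.1 n := hw
    have h1 : valBar v (n : ℕ) (QuotientGroup.mk w)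
        = ((Multiplicative.toAdd (v w) : ℤ) : ZMod (n : ℕ)) := rfl
    have h2 : ((Multiplicative.toAdd (v w) : ℤ) : ZMod (n : ℕ)) = 0 := by
      rw [← h1, hw']; exact hβ n
    have hdvd : ((n : ℕ) : ℤ) ∣ Multiplicative.toAdd (v w) :=
      (ZMod.intCast_zmod_eq_zero_iff_dvd _ _).1 h2
    obtain ⟨c, hc⟩ := hdvd
    refine ⟨w * ((π ^ c)⁻¹) ^ (n : ℕ), ?_, ?_⟩
    · rw [← hw']
      refine QuotientGroup.eq.2 ?_
      have hmem : ((π ^ c)⁻¹) ^ (n : ℕ) ∈ powSubgroup Kˣ (n : ℕ) := ⟨(π ^ c)⁻¹, rfl⟩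
      have heq : (w * ((π ^ c)⁻¹) ^ (n : ℕ))⁻¹ * w = (((π ^ c)⁻¹) ^ (n : ℕ))⁻¹ := by group
      rw [heq]
      exact inv_mem hmem
    · rw [map_mul, toAdd_mul, map_pow, toAdd_pow, map_inv, toAdd_inv, map_zpow, toAdd_zpow,
        hπ1, hc]
      simp
  choose u hu1 hu2 using hrep
  -- compatibility
  have hcompat : ∀ (m n : ℕ+), ((m : ℕ) ∣ (n : ℕ)) → ∃ z : Kˣ,
      Multiplicative.toAdd (v z) = 0 ∧ u n = u m * z ^ (m : ℕ) := by
    intro m n h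
    have h2 := β.2 m n h
    rw [← hu1 n, ← hu1 m] at h2
    have h3 : (QuotientGroup.mk (u n) : Kˣ ⧸ powSubgroup Kˣ (m : ℕ))
        = QuotientGroup.mk (u m) := by
      rw [← h2]
      rfl
    obtain ⟨z, hz⟩ := QuotientGroup.eq.1 h3.symm
    have hz' : z ^ (m : ℕ) = (u m)⁻¹ * u n := hz
    have hv0 : Multiplicative.toAdd (v z) = 0 := by
      have := congrArg (fun t => Multiplicative.toAdd (v t)) hz'
      simp only [map_pow, toAdd_pow, map_mul, toAdd_mul, map_inv, toAdd_inv,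
        hu2 m, hu2 n, neg_zero, add_zero, smul_eq_mul] at this
      have hmne : ((m : ℕ) : ℤ) ≠ 0 := by exact_mod_cast m.ne_zero
      exact by
        rcases mul_eq_zero.1 this with h | h
        · exact absurd h hmne
        · exact h
    refine ⟨z, hv0, ?_⟩
    rw [hz']
    group
  -- the chain of indices
  set NNp : ℕ → ℕ+ := fun k => ⟨NN p K k, NN_pos p K k⟩ with hNNp
  set mseq : ℕ → ℕ+ := fun k => Nat.rec (NNp 1) (fun k mk => mk * NNp (k + 2)) k with hmseq
  have hmseq_succ : ∀ k, mseq (k + 1) = mseq k * NNp (k + 2) := fun k => rfl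
  have hm1 : ∀ k, NN p K (k + 1) ∣ (mseq k : ℕ) := by
    intro k
    cases k with
    | zero => exact dvd_refl _
    | succ k =>
      rw [hmseq_succ, PNat.mul_coe]
      exact dvd_mul_left _ _
  have hm2 : ∀ k, (mseq k : ℕ) ∣ (mseq (k + 1) : ℕ) := by
    intro k
    rw [hmseq_succ, PNat.mul_coe]
    exact dvd_mul_right _ _
  -- the Cauchy sequences in R
  have humem : ∀ n : ℕ+, ((u n : K) ∈ integralClosure ℤ_[p] K) ∧
      (((u n)⁻¹ : Kˣ) : K) ∈ integralClosure ℤ_[p] K := fun n => (hv_unit (u n)).2 (hu2 n)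
  set f : ℕ → integralClosure ℤ_[p] K := fun k => ⟨(u (mseq k) : K), (humem _).1⟩ with hf
  set fi : ℕ → integralClosure ℤ_[p] K :=
    fun k => ⟨(((u (mseq k))⁻¹ : Kˣ) : K), (humem _).2⟩ with hfi
  have hfK : ∀ k, ((f k : integralClosure ℤ_[p] K) : K) = (u (mseq k) : K) := fun k => rfl
  have hfiK : ∀ k, ((fi k : integralClosure ℤ_[p] K) : K) = ((u (mseq k) : K))⁻¹ := by
    intro k
    show (((u (mseq k))⁻¹ : Kˣ) : K) = ((u (mseq k) : K))⁻¹
    rw [← Units.val_inv_eq_inv_val]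
  have hffi : ∀ k, f k * fi k = 1 := by
    intro k
    apply Subtype.ext
    push_cast [hfK, hfiK]
    exact mul_inv_cancel₀ (Units.ne_zero _)
  have okstep : ∀ k, ok p K v (k + 1) (u (mseq (k + 1)) * (u (mseq k))⁻¹) := by
    intro k
    obtain ⟨z, hz0, hz⟩ := hcompat (mseq k) (mseq (k + 1)) (hm2 k)
    have heq : u (mseq (k + 1)) * (u (mseq k))⁻¹ = z ^ ((mseq k : ℕ)) := by
      rw [hz, mul_comm (u (mseq k)) (z ^ ((mseq k : ℕ))), mul_inv_cancel_right]
    rw [heq]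
    exact ok_of_dvd_NN p K v hv_unit hz0 (hm1 k)
  have hfstep : ∀ k, f (k + 1) - f k ∈ Ideal.span {(p : integralClosure ℤ_[p] K) ^ k} := by
    intro k
    obtain ⟨hz0, r, hr⟩ := okstep k
    have hne : (u (mseq k) : K) ≠ 0 := Units.ne_zero _
    have hrK : (u (mseq (k + 1)) : K)
        = (u (mseq k) : K) * (1 + (p : K) ^ (k + 1) * r) := by
      rw [Units.val_mul, Units.val_inv_eq_inv_val] at hr
      field_simp at hr
      linear_combination hr
    have heq : f (k + 1) - f k = f k * ((p : integralClosure ℤ_[p] K) ^ (k + 1) * r) := by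
      apply Subtype.ext
      push_cast [hfK]
      linear_combination hrK
    rw [heq, Ideal.mem_span_singleton]
    exact ⟨f k * ((p : integralClosure ℤ_[p] K) * r), by ring⟩
  have hfistep : ∀ k, fi (k + 1) - fi k ∈ Ideal.span {(p : integralClosure ℤ_[p] K) ^ k} := by
    intro k
    have hne1 : (u (mseq k) : K) ≠ 0 := Units.ne_zero _
    have hne2 : (u (mseq (k + 1)) : K) ≠ 0 := Units.ne_zero _
    have heq : fi (k + 1) - fi k = -(fi k * fi (k + 1)) * (f (k + 1) - f k) := by
      apply Subtype.ext
      have hA : (u (mseq k) : K) * ((u (mseq k) : K))⁻¹ = 1 := mul_inv_cancel₀ hne1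
      have hB : (u (mseq (k + 1)) : K) * ((u (mseq (k + 1)) : K))⁻¹ = 1 := mul_inv_cancel₀ hne2
      push_cast [hfK, hfiK]
      linear_combination ((u (mseq k) : K))⁻¹ * hB - ((u (mseq (k + 1)) : K))⁻¹ * hA
    rw [heq]
    exact Ideal.mul_mem_left _ _ (hfstep k)
  obtain ⟨y, hy⟩ := R_complete p K f hfstep
  obtain ⟨yi, hyi⟩ := R_complete p K fi hfistep
  have hyyi : y * yi = 1 := by
    have hall : ∀ k, y * yi - 1 ∈ Ideal.span {(p : integralClosure ℤ_[p] K) ^ k} := by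
      intro k
      have h1 : y * yi - 1 = y * (yi - fi k) + fi k * (y - f k) + (f k * fi k - 1) := by ring
      rw [h1, hffi k, sub_self, add_zero]
      exact Ideal.add_mem _ (Ideal.mul_mem_left _ _ (hyi k)) (Ideal.mul_mem_left _ _ (hy k))
    have := R_haus p K _ hall
    linear_combination this
  have hKyyi : (y : K) * (yi : K) = 1 := by exact_mod_cast congrArg Subtype.val hyyi
  set x₀ : Kˣ := ⟨(y : K), (yi : K), hKyyi, by rw [mul_comm]; exact hKyyi⟩ with hx₀
  have hx₀K : (x₀ : K) = (y : K) := rfl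
  have hx₀invK : ((x₀⁻¹ : Kˣ) : K) = (yi : K) := rfl
  have hx₀v : Multiplicative.toAdd (v x₀) = 0 := by
    refine (hv_unit x₀).1 ⟨?_, ?_⟩
    · rw [hx₀K]; exact y.2
    · rw [hx₀invK]; exact yi.2
  have hclose : ∀ k, ok p K v k (x₀ * (u (mseq k))⁻¹) := by
    intro k
    obtain ⟨r, hr⟩ := Ideal.mem_span_singleton'.1 (hy k)
    have hrK : (r : K) * (p : K) ^ k = (y : K) - (u (mseq k) : K) := by
      have := congrArg Subtype.val hr
      push_cast at this
      exact this
    refine ⟨?_, r * fi k, ?_⟩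
    · rw [map_mul, toAdd_mul, map_inv, toAdd_inv, hx₀v, hu2, neg_zero, add_zero]
    · have hne : (u (mseq k) : K) ≠ 0 := Units.ne_zero _
      rw [Units.val_mul, Units.val_inv_eq_inv_val, hx₀K]
      have hAu : (u (mseq k) : K) * ((u (mseq k) : K))⁻¹ = 1 := mul_inv_cancel₀ hne
      push_cast [hfiK]
      linear_combination (-(((u (mseq k) : K))⁻¹)) * hrK + hAu
  -- conclusion
  refine MonoidHom.mem_range.2 ⟨x₀, ?_⟩
  apply Subtype.ext
  funext n
  show (QuotientGroup.mk x₀ : Kˣ ⧸ powSubgroup Kˣ (n : ℕ)) = β.1 n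
  rw [← hu1 n]
  refine (QuotientGroup.eq).2 ?_
  obtain ⟨z₁, hz₁0, hz₁⟩ := hcompat n (n * mseq (2 * ((n : ℕ).factorization p) + 1))
    ⟨(mseq (2 * ((n : ℕ).factorization p) + 1) : ℕ), by rw [PNat.mul_coe]⟩
  obtain ⟨z₂, hz₂0, hz₂⟩ := hcompat (mseq (2 * ((n : ℕ).factorization p) + 1))
    (n * mseq (2 * ((n : ℕ).factorization p) + 1))
    ⟨(n : ℕ), by rw [PNat.mul_coe]; ring⟩
  have okB : ok p K v (2 * ((n : ℕ).factorization p) + 1)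
      ((z₂ ^ ((mseq (2 * ((n : ℕ).factorization p) + 1) : ℕ)))⁻¹) :=
    ok_inv p K v hv_unit (ok_mono p K v (Nat.le_succ _)
      (ok_of_dvd_NN p K v hv_unit hz₂0 (hm1 _)))
  have okC : ok p K v (2 * ((n : ℕ).factorization p) + 1)
      (x₀ * (u (n * mseq (2 * ((n : ℕ).factorization p) + 1)))⁻¹) := by
    have heq : x₀ * (u (n * mseq (2 * ((n : ℕ).factorization p) + 1)))⁻¹
        = (x₀ * (u (mseq (2 * ((n : ℕ).factorization p) + 1)))⁻¹)
          * (z₂ ^ ((mseq (2 * ((n : ℕ).factorization p) + 1) : ℕ)))⁻¹ := by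
      rw [hz₂, mul_inv_rev, mul_comm ((z₂ ^ ((mseq (2 * ((n : ℕ).factorization p) + 1) : ℕ)))⁻¹)
        ((u (mseq (2 * ((n : ℕ).factorization p) + 1)))⁻¹), mul_assoc]
    rw [heq]
    exact ok_mul p K v (hclose _) okB
  obtain ⟨z, hzz⟩ := ok_root p K v (n := (n : ℕ)) n.pos okC
  have key : (x₀⁻¹ * u n) * ((z * z₁) ^ ((n : ℕ))) = 1 := by
    rw [mul_pow]
    calc x₀⁻¹ * u n * (z ^ (n : ℕ) * z₁ ^ (n : ℕ))
        = x₀⁻¹ * (z ^ (n : ℕ)) * (u n * z₁ ^ (n : ℕ)) := mul_mul_mul_comm _ _ _ _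
      _ = x₀⁻¹ * (x₀ * (u (n * mseq (2 * ((n : ℕ).factorization p) + 1)))⁻¹)
          * (u (n * mseq (2 * ((n : ℕ).factorization p) + 1))) := by rw [hzz, hz₁]
      _ = 1 := by group
  refine ⟨(z * z₁)⁻¹, ?_⟩
  show ((z * z₁)⁻¹) ^ ((n : ℕ)) = x₀⁻¹ * u n
  rw [inv_pow]
  exact inv_eq_of_mul_eq_one_left key

omit [FiniteDimensional ℚ_[p] K] in
lemma valBar_mul (n : ℕ) (q r : Kˣ ⧸ powSubgroup Kˣ n) :
    valBar v n (q * r) = valBar v n q + valBar v n r := by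
  refine Quotient.inductionOn₂' q r (fun x y => ?_)
  show ((Multiplicative.toAdd (v (x * y)) : ℤ) : ZMod n)
      = ((Multiplicative.toAdd (v x) : ℤ) : ZMod n)
        + ((Multiplicative.toAdd (v y) : ℤ) : ZMod n)
  rw [map_mul, toAdd_mul]
  push_cast
  ring

omit [FiniteDimensional ℚ_[p] K] in
lemma valBar_inv (n : ℕ) (q : Kˣ ⧸ powSubgroup Kˣ n) :
    valBar v n q⁻¹ = -valBar v n q := by
  refine Quotient.inductionOn' q (fun x => ?_)
  show ((Multiplicative.toAdd (v x⁻¹) : ℤ) : ZMod n)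
      = -((Multiplicative.toAdd (v x) : ℤ) : ZMod n)
  rw [map_inv, toAdd_inv]
  push_cast
  ring

omit [FiniteDimensional ℚ_[p] K] in
lemma valHat_mul (α β : hatGroup Kˣ) :
    valHat v (α * β) = valHat v α + valHat v β := by
  apply Subtype.ext
  funext n
  show valBar v (n : ℕ) ((α * β).1 n) = valBar v (n : ℕ) (α.1 n) + valBar v (n : ℕ) (β.1 n)
  have h1 : (α * β).1 n = α.1 n * β.1 n := rfl
  rw [h1, valBar_mul]

omit [FiniteDimensional ℚ_[p] K] in
lemma valHat_inv (α : hatGroup Kˣ) : valHat v α⁻¹ = -valHat v α := by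
  apply Subtype.ext
  funext n
  show valBar v (n : ℕ) ((α⁻¹).1 n) = -valBar v (n : ℕ) (α.1 n)
  have h1 : (α⁻¹).1 n = (α.1 n)⁻¹ := rfl
  rw [h1, valBar_inv]

omit [FiniteDimensional ℚ_[p] K] in
lemma valHat_toHat (x : Kˣ) :
    valHat v (toHatGroup Kˣ x) = toZHat (Multiplicative.toAdd (v x)) := by
  apply Subtype.ext
  funext n
  rfl

omit [FiniteDimensional ℚ_[p] K] in
/-- the section: every element of `ZHat` is `v̂` of something. -/
lemma exists_valHat_eq (hv_surj : Function.Surjective v) (a : ZHat) :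
    ∃ α : hatGroup Kˣ, valHat v α = a := by
  obtain ⟨π, hπ⟩ := hv_surj (Multiplicative.ofAdd 1)
  have hπ1 : Multiplicative.toAdd (v π) = 1 := by rw [hπ]; rfl
  have compat : ∀ (m n : ℕ+) (h : (m : ℕ) ∣ (n : ℕ)),
      powTransition Kˣ h (QuotientGroup.mk (π ^ ((a.1 n).val)))
        = QuotientGroup.mk (π ^ ((a.1 m).val)) := by
    intro m n h
    haveI : NeZero (n : ℕ) := ⟨n.ne_zero⟩
    haveI : NeZero (m : ℕ) := ⟨m.ne_zero⟩
    have hcast : (((a.1 n).val : ℕ) : ZMod (m : ℕ)) = (((a.1 m).val : ℕ) : ZMod (m : ℕ)) := by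
      rw [ZMod.natCast_val, ZMod.natCast_val, ZMod.cast_id]
      rw [← ZMod.castHom_apply (h := h), a.2 m n h]
    have hmod : (a.1 n).val ≡ (a.1 m).val [MOD (m : ℕ)] :=
      (ZMod.natCast_eq_natCast_iff _ _ _).1 hcast
    obtain ⟨t, ht⟩ := hmod.dvd
    have h2 : powTransition Kˣ h (QuotientGroup.mk (π ^ ((a.1 n).val)))
        = QuotientGroup.mk (π ^ ((a.1 n).val)) := rfl
    rw [h2]
    refine QuotientGroup.eq.2 ?_
    refine ⟨π ^ t, ?_⟩
    show (π ^ t) ^ ((m : ℕ)) = (π ^ ((a.1 n).val))⁻¹ * π ^ ((a.1 m).val)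
    have h3 : (π ^ t) ^ ((m : ℕ)) = π ^ (t * ((m : ℕ) : ℤ)) := by
      rw [← zpow_natCast (π ^ t), ← zpow_mul]
    have h4 : (π ^ ((a.1 n).val))⁻¹ * π ^ ((a.1 m).val)
        = π ^ ((((a.1 m).val : ℤ)) - (((a.1 n).val : ℤ))) := by
      rw [← zpow_natCast π ((a.1 n).val), ← zpow_natCast π ((a.1 m).val),
        ← zpow_neg, ← zpow_add]
      congr 1
      ring
    rw [h3, h4, ht]
    congr 1
    ring
  refine ⟨⟨fun n => QuotientGroup.mk (π ^ ((a.1 n).val)), compat⟩, ?_⟩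
  apply Subtype.ext
  funext n
  haveI : NeZero (n : ℕ) := ⟨n.ne_zero⟩
  show ((Multiplicative.toAdd (v (π ^ ((a.1 n).val))) : ℤ) : ZMod (n : ℕ)) = a.1 n
  rw [map_pow, toAdd_pow, hπ1]
  have : ((a.1 n).val : ℕ) • (1 : ℤ) = ((a.1 n).val : ℤ) := by simp
  rw [this]
  push_cast
  rw [ZMod.natCast_val, ZMod.cast_id]

include hv_unit in
/-- if `v̂ α` is in the image of `ℤ`, then `α` is in the image of `Kˣ`. -/
lemma core (hv_surj : Function.Surjective v) (α : hatGroup Kˣ) (c : ℤ)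
    (hα : valHat v α = toZHat c) : α ∈ (toHatGroup Kˣ).range := by
  obtain ⟨π, hπ⟩ := hv_surj (Multiplicative.ofAdd 1)
  have hπ1 : Multiplicative.toAdd (v π) = 1 := by rw [hπ]; rfl
  have hπc : Multiplicative.toAdd (v (π ^ c)) = c := by
    rw [map_zpow, toAdd_zpow, hπ1, smul_eq_mul, mul_one]
  set δ : hatGroup Kˣ := α * (toHatGroup Kˣ (π ^ c))⁻¹ with hδ
  have hδ0 : valHat v δ = 0 := by
    rw [hδ, valHat_mul, valHat_inv, valHat_toHat, hπc, hα]
    abel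
  have hδmem : δ ∈ (toHatGroup Kˣ).range := by
    refine core0 p K v hv_unit hv_surj δ (fun n => ?_)
    have := congrArg (fun z : ZHat => z.1 n) hδ0
    exact this
  have : α = δ * toHatGroup Kˣ (π ^ c) := by
    rw [hδ, inv_mul_cancel_right]
  rw [this]
  exact mul_mem hδmem ⟨π ^ c, rfl⟩

end St5


/-- Let `K` be a finite extension of `ℚ_p` with normalized valuation
`v : Kˣ → ℤ`.  The homomorphism `v̂ : K̂ˣ → Ẑ` induced by `v` on completions induces a
bijection (a group isomorphism) between the quotient of `K̂ˣ = lim_n Kˣ/(Kˣ)ⁿ` by the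
image of `Kˣ` and the quotient of `Ẑ = lim_n ℤ/nℤ` by the image of `ℤ`. -/
theorem valHat_induces_bijection_on_quotients
    (p : ℕ) [Fact p.Prime] (K : Type*) [Field K] [Algebra ℚ_[p] K]
    [FiniteDimensional ℚ_[p] K] (v : Kˣ →* Multiplicative ℤ)
    (hv_surj : Function.Surjective v)
    (hv_unit : ∀ x : Kˣ, ((x : K) ∈ integralClosure ℤ_[p] K ∧
      ((x⁻¹ : Kˣ) : K) ∈ integralClosure ℤ_[p] K) ↔ Multiplicative.toAdd (v x) = 0)
    (hv_int : ∀ x : Kˣ, (x : K) ∈ integralClosure ℤ_[p] K ↔ 0 ≤ Multiplicative.toAdd (v x)) :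
    ∃ g : (hatGroup Kˣ ⧸ (toHatGroup Kˣ).range) → (ZHat ⧸ (toZHat).range),
      (∀ α : hatGroup Kˣ, g (QuotientGroup.mk α) = QuotientAddGroup.mk (valHat v α)) ∧
      (∀ a b : hatGroup Kˣ ⧸ (toHatGroup Kˣ).range, g (a * b) = g a + g b) ∧
      Function.Bijective g := by
  classical
  set g : (hatGroup Kˣ ⧸ (toHatGroup Kˣ).range) → (ZHat ⧸ (toZHat).range) :=
    fun q => Quotient.liftOn' q
      (fun α => (QuotientAddGroup.mk (valHat v α) : ZHat ⧸ (toZHat).range))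
      (by
        intro α β hab
        obtain ⟨x, hx⟩ := QuotientGroup.leftRel_apply.mp hab
        have hβ : β = α * toHatGroup Kˣ x := by rw [hx, mul_inv_cancel_left]
        refine QuotientAddGroup.eq.2 ?_
        refine ⟨Multiplicative.toAdd (v x), ?_⟩
        rw [hβ, St5.valHat_mul, St5.valHat_toHat]
        abel) with hg
  refine ⟨g, fun α => rfl, ?_, ?_, ?_⟩
  · intro a b
    refine Quotient.inductionOn₂' a b (fun α β => ?_)
    show (QuotientAddGroup.mk (valHat v (α * β)) : ZHat ⧸ (toZHat).range)
        = QuotientAddGroup.mk (valHat v α) + QuotientAddGroup.mk (valHat v β)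
    rw [St5.valHat_mul]
    rfl
  · intro a b hab
    refine Quotient.inductionOn₂' a b (fun α β hab => ?_) hab
    have hab' : (QuotientAddGroup.mk (valHat v α) : ZHat ⧸ (toZHat).range)
        = QuotientAddGroup.mk (valHat v β) := hab
    obtain ⟨c, hc⟩ := QuotientAddGroup.eq.1 hab'
    have hγ : valHat v (α⁻¹ * β) = toZHat c := by
      rw [St5.valHat_mul, St5.valHat_inv]
      exact hc.symm
    have hmem := St5.core p K v hv_unit hv_surj (α⁻¹ * β) c hγ
    exact QuotientGroup.eq.2 hmem
  · intro b
    refine Quotient.inductionOn' b (fun a => ?_)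
    obtain ⟨α, hα⟩ := St5.exists_valHat_eq (K := K) (v := v) hv_surj a
    refine ⟨QuotientGroup.mk α, ?_⟩
    show (QuotientAddGroup.mk (valHat v α) : ZHat ⧸ (toZHat).range) = Quotient.mk'' a
    rw [hα]
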